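/- arXiv:1608.08619 — 2 statements merged into one kernel-verified Lean document; each statement's English description precedes it below -/
import Mathlib

section
/- Let R be a G-crossed product (i.e. a G-graded unital ring such that each component R_g contains a unit of R). Then R is G-controlled if and only if R_e is a simple ring and for every invertible u_g ∈ R_g with g ≠ e, the automorphism a ↦ u_g a u_g⁻¹ of R_e is outer (not inner). -/
open DirectSum Pointwise

namespace Controlled

variable {G R : Type*} [AddGroup G] [DecidableEq G] [Ring R]

/-- `P` is an `R_e`-sub-bimodule of `R` (w.r.t. the grading `𝒜`, written additively,
so `R_e = 𝒜 0`). -/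
def IsSubBimodule (𝒜 : G → AddSubgroup R) (P : AddSubgroup R) : Prop :=
  ∀ a ∈ 𝒜 0, ∀ x ∈ P, a * x ∈ P ∧ x * a ∈ P

/-- The `R_e`-bimodule `R_H = ⊕_{h ∈ H} R_h` (internally, the subgroup generated by
the `R_h`, `h ∈ H`; the sum is automatically direct). `R_∅ = ⊥ = {0}`. -/
def RH (𝒜 : G → AddSubgroup R) (H : Set G) : AddSubgroup R := ⨆ h ∈ H, 𝒜 h

/-- An `R_e`-bimodule isomorphism between additive subgroups `P` and `Q` of `R`:
an additive equivalence compatible with left and right multiplication by `R_e = 𝒜 0`. -/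
structure BimodIso (𝒜 : G → AddSubgroup R) (P Q : AddSubgroup R) where
  toEquiv : P ≃+ Q
  map_left : ∀ (a x : R), a ∈ 𝒜 0 → ∀ (hx : x ∈ P) (hax : a * x ∈ P),
    (toEquiv ⟨a * x, hax⟩ : R) = a * (toEquiv ⟨x, hx⟩ : R)
  map_right : ∀ (a x : R), a ∈ 𝒜 0 → ∀ (hx : x ∈ P) (hxa : x * a ∈ P),
    (toEquiv ⟨x * a, hxa⟩ : R) = (toEquiv ⟨x, hx⟩ : R) * a

/-- `R` is `G`-controlled: `H ↦ R_H` is a bijection from subsets of `G` onto the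
`R_e`-sub-bimodules of `R`, and `R_S ≅ R_T` (as `R_e`-bimodules) iff `S = T`. -/
def IsControlled (𝒜 : G → AddSubgroup R) : Prop :=
  (∀ H : Set G, IsSubBimodule 𝒜 (RH 𝒜 H)) ∧
  Function.Injective (RH 𝒜) ∧
  (∀ P : AddSubgroup R, IsSubBimodule 𝒜 P → ∃ H : Set G, RH 𝒜 H = P) ∧
  (∀ S T : Set G, Nonempty (BimodIso 𝒜 (RH 𝒜 S) (RH 𝒜 T)) ↔ S = T)

/-- `P` is a (nonzero) simple `R_e`-bimodule contained in `R`. -/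
def IsSimpleBimod (𝒜 : G → AddSubgroup R) (P : AddSubgroup R) : Prop :=
  P ≠ ⊥ ∧ ∀ Q : AddSubgroup R, Q ≤ P → IsSubBimodule 𝒜 Q → Q = ⊥ ∨ Q = P

/-- The product `AB` of two additive subgroups of `R`: all finite sums of products. -/
def mulSub (A B : AddSubgroup R) : AddSubgroup R :=
  AddSubgroup.closure ((A : Set R) * (B : Set R))

/-- `R` is strongly graded: `R_g R_h = R_{g+h}` for all `g, h`. -/
def IsStronglyGraded (𝒜 : G → AddSubgroup R) : Prop :=
  ∀ g h : G, mulSub (𝒜 g) (𝒜 h) = 𝒜 (g + h)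

/-- `C_R(R_e) = Z(R_e)` as subsets of `R`. -/
def CentralizerEqCenter (𝒜 : G → AddSubgroup R) : Prop :=
  {x : R | ∀ r ∈ 𝒜 0, x * r = r * x} = {x : R | x ∈ 𝒜 0 ∧ ∀ r ∈ 𝒜 0, x * r = r * x}

/-- A two-sided ideal `I` is graded if each homogeneous component of each of its
elements again lies in `I` (equivalently, `I = ⊕_g (I ∩ R_g)`). -/
def IsGradedIdeal (𝒜 : G → AddSubgroup R) [GradedRing 𝒜] (I : TwoSidedIdeal R) : Prop :=
  ∀ x ∈ I, ∀ g : G, (DirectSum.decompose 𝒜 x g : R) ∈ I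

/-- `R` is graded simple: the only graded two-sided ideals are `{0}` and `R`. -/
def IsGradedSimple (𝒜 : G → AddSubgroup R) [GradedRing 𝒜] : Prop :=
  ∀ I : TwoSidedIdeal R, IsGradedIdeal 𝒜 I → I = ⊥ ∨ I = ⊤

end Controlled

variable {G R : Type*} [AddGroup G] [DecidableEq G] [Ring R]

/-!
Everything rests on one rigidity fact: if `R_e` is simple and the action is outer, a nonzero
`z ∈ R_t` with `u a u⁻¹ z = z a` for all `a ∈ R_e` (`u` a unit of `R_s`) forces `s = t`. Indeed
`w⁻¹ z ∈ R_e` (`w` a unit of `R_t`) is then a normal element of the simple ring `R_e`, hence a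
unit, and it makes conjugation by `w⁻¹ u ∈ R_{t⁻¹s}` inner.

A sub-bimodule `P` equals `R_H` for `H = {g | R_g ⊆ P}`: by induction on the support of `x ∈ P`,
simplicity of `R_e` produces `y ∈ P` with the same support and `y_g = u_g`; the commutators
`u_g a u_g⁻¹ y - y a` have smaller support, and rigidity kills every component of `y` outside
`H ∪ {g}`, so `u_g ∈ P`. A bimodule isomorphism `R_S ≅ R_T` sends `u_s` to such an intertwiner,
whence `S ⊆ T`. Conversely, ideals of `R_e` are sub-bimodules inside `R_e`, and a unit of `R_g`
centralising `R_e` (which an inner `u_g`-conjugation provides) gives `R_e ≅ R_g` by right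
multiplication.
-/

namespace Controlled

section Family

variable {ι : Type*} (𝒜 : ι → AddSubgroup R)

theorem grade_le_RH {H : Set ι} {g : ι} (hg : g ∈ H) : 𝒜 g ≤ RH 𝒜 H :=
  le_iSup₂ (f := fun h _ => 𝒜 h) g hg

theorem RH_le {H : Set ι} {P : AddSubgroup R} (h : ∀ g ∈ H, 𝒜 g ≤ P) : RH 𝒜 H ≤ P :=
  iSup₂_le h

theorem RH_empty : RH 𝒜 ∅ = ⊥ := by
  simp [RH]

theorem RH_singleton (g : ι) : RH 𝒜 {g} = 𝒜 g := by
  simp [RH]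

end Family

section Grading

variable (𝒜 : G → AddSubgroup R) [GradedRing 𝒜]

theorem mul_mem_of_add_eq {i j k : G} {a b : R} (ha : a ∈ 𝒜 i) (hb : b ∈ 𝒜 j) (h : i + j = k) :
    a * b ∈ 𝒜 k :=
  h ▸ SetLike.mul_mem_graded ha hb

theorem mem_RH_iff {H : Set G} {x : R} :
    x ∈ RH 𝒜 H ↔ ∀ g ∉ H, (decompose 𝒜 x g : R) = 0 := by
  classical
  constructor
  · intro hx g hg
    have hle : RH 𝒜 H ≤ (GradedRing.proj 𝒜 g).ker :=
      RH_le 𝒜 fun h hh y hy => decompose_of_mem_ne 𝒜 hy (by rintro rfl; exact hg hh)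
    simpa [GradedRing.proj_apply] using hle hx
  · intro h
    rw [← sum_support_decompose 𝒜 x]
    refine sum_mem fun g hg => grade_le_RH 𝒜 ?_ (decompose 𝒜 x g).2
    by_contra hgH
    exact DFinsupp.mem_support_iff.mp hg (Subtype.ext (h g hgH))

theorem val_inv_mem_neg {u : Rˣ} {g : G} (hu : (u : R) ∈ 𝒜 g) : ((u⁻¹ : Rˣ) : R) ∈ 𝒜 (-g) := by
  rw [← RH_singleton 𝒜 (-g), mem_RH_iff]
  intro h hh
  have hgh : g + h ≠ 0 := fun h0 => hh (eq_neg_of_add_eq_zero_right h0)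
  calc (decompose 𝒜 ((u⁻¹ : Rˣ) : R) h : R)
      = ((u⁻¹ : Rˣ) : R) * (decompose 𝒜 ((u : R) * ((u⁻¹ : Rˣ) : R)) (g + h) : R) := by
        rw [coe_decompose_mul_add_of_left_mem 𝒜 hu, Units.inv_mul_cancel_left]
    _ = 0 := by
        rw [Units.mul_inv, decompose_of_mem_ne 𝒜 (SetLike.one_mem_graded 𝒜) hgh.symm, mul_zero]

theorem conj_mem_zero {u : Rˣ} {g : G} (hu : (u : R) ∈ 𝒜 g) {a : R} (ha : a ∈ 𝒜 0) :
    (u : R) * a * ((u⁻¹ : Rˣ) : R) ∈ 𝒜 0 :=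
  mul_mem_of_add_eq 𝒜 (mul_mem_of_add_eq 𝒜 hu ha rfl) (val_inv_mem_neg 𝒜 hu) (by simp)

theorem inv_conj_mem_zero {u : Rˣ} {g : G} (hu : (u : R) ∈ 𝒜 g) {a : R} (ha : a ∈ 𝒜 0) :
    ((u⁻¹ : Rˣ) : R) * a * (u : R) ∈ 𝒜 0 := by
  simpa using conj_mem_zero 𝒜 (val_inv_mem_neg 𝒜 hu) ha

theorem coe_decompose_mul_sub_mul {c a : R} (hc : c ∈ 𝒜 0) (ha : a ∈ 𝒜 0) (x : R) (g : G) :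
    (decompose 𝒜 (c * x - x * a) g : R) = c * decompose 𝒜 x g - decompose 𝒜 x g * a := by
  rw [decompose_sub, DFinsupp.sub_apply, AddSubgroup.coe_sub,
    coe_decompose_mul_of_left_mem_zero 𝒜 hc, coe_decompose_mul_of_right_mem_zero 𝒜 ha]

theorem nontrivial_of_isSimpleRing_zero [IsSimpleRing (𝒜 0)] : Nontrivial R :=
  ⟨⟨1, 0, fun h => one_ne_zero (Subtype.ext h : (1 : 𝒜 0) = 0)⟩⟩

end Grading

section SimpleZero

variable {𝒜 : G → AddSubgroup R} [GradedRing 𝒜] [IsSimpleRing (𝒜 0)]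

theorem IsSubBimodule.one_mem {P : AddSubgroup R} (hP : IsSubBimodule 𝒜 P) (hP0 : P ≤ 𝒜 0)
    {x : R} (hx : x ∈ P) (hx0 : x ≠ 0) : (1 : R) ∈ P := by
  let I : TwoSidedIdeal (𝒜 0) := .mk' {c | (c : R) ∈ P} P.zero_mem P.add_mem P.neg_mem
    (fun {c d} hd => (hP c c.2 d hd).1) (fun {c d} hc => (hP d d.2 c hc).2)
  have h1 := IsSimpleRing.one_mem_of_ne_zero_mem I (x := ⟨x, hP0 hx⟩)
    (fun h => hx0 (congrArg Subtype.val h)) ((TwoSidedIdeal.mem_mk' ..).2 hx)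
  exact (TwoSidedIdeal.mem_mk' (R := 𝒜 0) _ _ _ _ _ _ 1).1 h1

-- `q R_e ⊆ R_e q` makes `R_e q` a two-sided ideal of `R_e`, symmetrically for `q R_e`.
theorem exists_left_inv_of_normal {q : R} (hq : q ∈ 𝒜 0) (hq0 : q ≠ 0)
    (h : ∀ a ∈ 𝒜 0, ∃ b ∈ 𝒜 0, q * a = b * q) : ∃ s ∈ 𝒜 0, s * q = 1 := by
  have hP : IsSubBimodule 𝒜 ((𝒜 0).map (AddMonoidHom.mulRight q)) := by
    rintro a ha _ ⟨x, hx, rfl⟩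
    obtain ⟨b, hb, hab⟩ := h a ha
    refine ⟨⟨a * x, mul_mem_of_add_eq 𝒜 ha hx (add_zero 0), mul_assoc a x q⟩,
      ⟨x * b, mul_mem_of_add_eq 𝒜 hx hb (add_zero 0), ?_⟩⟩
    simp only [AddMonoidHom.coe_mulRight, mul_assoc, hab]
  have hP0 : (𝒜 0).map (AddMonoidHom.mulRight q) ≤ 𝒜 0 := by
    rintro _ ⟨x, hx, rfl⟩
    exact mul_mem_of_add_eq 𝒜 hx hq (add_zero 0)
  simpa using hP.one_mem hP0 ⟨1, SetLike.one_mem_graded 𝒜, one_mul q⟩ hq0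

theorem exists_right_inv_of_normal {q : R} (hq : q ∈ 𝒜 0) (hq0 : q ≠ 0)
    (h : ∀ a ∈ 𝒜 0, ∃ b ∈ 𝒜 0, a * q = q * b) : ∃ t ∈ 𝒜 0, q * t = 1 := by
  have hP : IsSubBimodule 𝒜 ((𝒜 0).map (AddMonoidHom.mulLeft q)) := by
    rintro a ha _ ⟨x, hx, rfl⟩
    obtain ⟨b, hb, hab⟩ := h a ha
    refine ⟨⟨b * x, mul_mem_of_add_eq 𝒜 hb hx (add_zero 0), ?_⟩,
      ⟨x * a, mul_mem_of_add_eq 𝒜 hx ha (add_zero 0), (mul_assoc q x a).symm⟩⟩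
    simp only [AddMonoidHom.coe_mulLeft, ← mul_assoc, hab]
  have hP0 : (𝒜 0).map (AddMonoidHom.mulLeft q) ≤ 𝒜 0 := by
    rintro _ ⟨x, hx, rfl⟩
    exact mul_mem_of_add_eq 𝒜 hq hx (add_zero 0)
  simpa using hP.one_mem hP0 ⟨1, SetLike.one_mem_graded 𝒜, mul_one q⟩ hq0

end SimpleZero

section CrossedProduct

variable (𝒜 : G → AddSubgroup R)

def IsCrossedProduct : Prop :=
  ∀ g : G, ∃ u : Rˣ, (u : R) ∈ 𝒜 g

def IsInnerOnZero (u : Rˣ) : Prop :=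
  ∃ v w : R, v ∈ 𝒜 0 ∧ w ∈ 𝒜 0 ∧ v * w = 1 ∧ w * v = 1 ∧
    ∀ a ∈ 𝒜 0, (u : R) * a * ((u⁻¹ : Rˣ) : R) = v * a * w

def IsOuterAction : Prop :=
  ∀ g : G, g ≠ 0 → ∀ u : Rˣ, (u : R) ∈ 𝒜 g → ¬ IsInnerOnZero 𝒜 u

variable {𝒜} [GradedRing 𝒜] [IsSimpleRing (𝒜 0)]

theorem isInnerOnZero_of_conj_mul_eq {h : G} {T : Rˣ} (hT : (T : R) ∈ 𝒜 h) {q : R}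
    (hq : q ∈ 𝒜 0) (hq0 : q ≠ 0)
    (hTq : ∀ a ∈ 𝒜 0, (T : R) * a * ((T⁻¹ : Rˣ) : R) * q = q * a) : IsInnerOnZero 𝒜 T := by
  obtain ⟨s, hs, hsq⟩ := exists_left_inv_of_normal hq hq0 fun a ha =>
    ⟨_, conj_mem_zero 𝒜 hT ha, (hTq a ha).symm⟩
  obtain ⟨t, -, hqt⟩ := exists_right_inv_of_normal hq hq0 fun a ha =>
    ⟨_, inv_conj_mem_zero 𝒜 hT ha, by simpa [mul_assoc] using hTq _ (inv_conj_mem_zero 𝒜 hT ha)⟩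
  obtain rfl : s = t := by
    rw [← mul_one s, ← hqt, ← mul_assoc, hsq, one_mul]
  refine ⟨q, s, hq, hs, hqt, hsq, fun a ha => ?_⟩
  rw [← mul_one ((T : R) * a * _), ← hqt, ← mul_assoc, hTq a ha]

theorem eq_of_conj_mul_eq (houter : IsOuterAction 𝒜) (hcp : IsCrossedProduct 𝒜) {s t : G}
    {u : Rˣ} (hu : (u : R) ∈ 𝒜 s) {z : R} (hz : z ∈ 𝒜 t) (hz0 : z ≠ 0)
    (h : ∀ a ∈ 𝒜 0, (u : R) * a * ((u⁻¹ : Rˣ) : R) * z = z * a) : s = t := by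
  obtain ⟨w, hw⟩ := hcp t
  have hT : ((w⁻¹ * u : Rˣ) : R) ∈ 𝒜 (-t + s) :=
    mul_mem_of_add_eq 𝒜 (val_inv_mem_neg 𝒜 hw) hu rfl
  have hq : ((w⁻¹ : Rˣ) : R) * z ∈ 𝒜 0 :=
    mul_mem_of_add_eq 𝒜 (val_inv_mem_neg 𝒜 hw) hz (neg_add_cancel t)
  have hq0 : ((w⁻¹ : Rˣ) : R) * z ≠ 0 := (Units.mul_right_eq_zero _).not.mpr hz0
  by_contra hst
  refine houter (-t + s) (fun h0 => hst (neg_add_eq_zero.1 h0).symm) _ hT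
    (isInnerOnZero_of_conj_mul_eq hT hq hq0 fun a ha => ?_)
  simp only [mul_inv_rev, inv_inv, Units.val_mul, mul_assoc, Units.mul_inv_cancel_left]
  simp only [← mul_assoc, h a ha]

end CrossedProduct

section Bimodules

variable {𝒜 : G → AddSubgroup R} [GradedRing 𝒜]

theorem isSubBimodule_RH (H : Set G) : IsSubBimodule 𝒜 (RH 𝒜 H) := by
  intro a ha x hx
  rw [mem_RH_iff] at hx
  refine ⟨(mem_RH_iff 𝒜).2 fun g hg => ?_, (mem_RH_iff 𝒜).2 fun g hg => ?_⟩
  · rw [coe_decompose_mul_of_left_mem_zero 𝒜 ha, hx g hg, mul_zero]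
  · rw [coe_decompose_mul_of_right_mem_zero 𝒜 ha, hx g hg, zero_mul]

theorem grade_le_of_unit_mem {P : AddSubgroup R} (hP : IsSubBimodule 𝒜 P) {g : G} {u : Rˣ}
    (hu : (u : R) ∈ 𝒜 g) (huP : (u : R) ∈ P) : 𝒜 g ≤ P := by
  intro r hr
  have h := (hP _ (mul_mem_of_add_eq 𝒜 hr (val_inv_mem_neg 𝒜 hu) (add_neg_cancel g)) _ huP).1
  rwa [Units.inv_mul_cancel_right] at h

theorem coe_decompose_sub_decompose (x : R) (g k : G) :
    (decompose 𝒜 (x - decompose 𝒜 x g) k : R) = if k = g then 0 else (decompose 𝒜 x k : R) := by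
  rw [decompose_sub, DFinsupp.sub_apply, AddSubgroup.coe_sub]
  split_ifs with hkg
  · rw [hkg, decompose_of_mem_same 𝒜 (decompose 𝒜 x g).2, sub_self]
  · rw [decompose_of_mem_ne 𝒜 (decompose 𝒜 x g).2 (Ne.symm hkg), sub_zero]

variable [IsSimpleRing (𝒜 0)]

theorem exists_decompose_eq_unit {Q : AddSubgroup R} (hQ : IsSubBimodule 𝒜 Q) {x : R}
    (hx : x ∈ Q) {g : G} (hxg : (decompose 𝒜 x g : R) ≠ 0) {u : Rˣ} (hu : (u : R) ∈ 𝒜 g) :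
    ∃ y ∈ Q, (decompose 𝒜 y g : R) = u := by
  -- the `g`-components of `Q`, moved into `R_e` by `u⁻¹`, form an ideal of `R_e`
  set J := Q.map ((AddMonoidHom.mulRight ((u⁻¹ : Rˣ) : R)).comp (GradedRing.proj 𝒜 g))
  have hJ : IsSubBimodule 𝒜 J := by
    rintro a ha _ ⟨y, hy, rfl⟩
    have hσa := inv_conj_mem_zero 𝒜 hu ha
    refine ⟨⟨a * y, (hQ a ha y hy).1, ?_⟩, ⟨y * (((u⁻¹ : Rˣ) : R) * a * u), (hQ _ hσa y hy).2, ?_⟩⟩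
    · simp only [AddMonoidHom.coe_comp, Function.comp_apply, AddMonoidHom.coe_mulRight,
        GradedRing.proj_apply, coe_decompose_mul_of_left_mem_zero 𝒜 ha, mul_assoc]
    · simp only [AddMonoidHom.coe_comp, Function.comp_apply, AddMonoidHom.coe_mulRight,
        GradedRing.proj_apply]
      rw [coe_decompose_mul_of_right_mem_zero 𝒜 hσa]
      simp only [mul_assoc, Units.mul_inv, mul_one]
  have hJ0 : J ≤ 𝒜 0 := by
    rintro _ ⟨y, -, rfl⟩
    exact mul_mem_of_add_eq 𝒜 (decompose 𝒜 y g).2 (val_inv_mem_neg 𝒜 hu) (add_neg_cancel g)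
  obtain ⟨y, hy, hy1⟩ := hJ.one_mem hJ0 ⟨x, hx, rfl⟩ ((Units.mul_left_eq_zero _).not.2 hxg)
  exact ⟨y, hy, by simpa [GradedRing.proj_apply, Units.mul_inv_eq_one] using hy1⟩

end Bimodules

section Classification

variable {𝒜 : G → AddSubgroup R} [GradedRing 𝒜]

theorem subset_of_RH_le [Nontrivial R] (hcp : IsCrossedProduct 𝒜) {S T : Set G}
    (h : RH 𝒜 S ≤ RH 𝒜 T) : S ⊆ T := by
  intro g hg
  obtain ⟨u, hu⟩ := hcp g
  by_contra hgT
  have hug := (mem_RH_iff 𝒜).1 (h (grade_le_RH 𝒜 hg hu)) g hgT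
  exact u.ne_zero (by rwa [decompose_of_mem_same 𝒜 hu] at hug)

theorem RH_injective [Nontrivial R] (hcp : IsCrossedProduct 𝒜) : Function.Injective (RH 𝒜) :=
  fun _ _ h => (subset_of_RH_le hcp h.le).antisymm (subset_of_RH_le hcp h.ge)

variable [IsSimpleRing (𝒜 0)]

theorem grade_le_of_decompose_ne_zero (houter : IsOuterAction 𝒜) (hcp : IsCrossedProduct 𝒜)
    {P : AddSubgroup R} (hP : IsSubBimodule 𝒜 P) {T : Set G} {g : G}
    (hT : P ⊓ RH 𝒜 (T \ {g}) ≤ RH 𝒜 {k | 𝒜 k ≤ P}) {x : R} (hx : x ∈ P ⊓ RH 𝒜 T)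
    (hxg : (decompose 𝒜 x g : R) ≠ 0) : 𝒜 g ≤ P := by
  obtain ⟨u, hu⟩ := hcp g
  have hQ : IsSubBimodule 𝒜 (P ⊓ RH 𝒜 T) := fun a ha y hy =>
    ⟨⟨(hP a ha y hy.1).1, (isSubBimodule_RH T a ha y hy.2).1⟩,
      ⟨(hP a ha y hy.1).2, (isSubBimodule_RH T a ha y hy.2).2⟩⟩
  obtain ⟨y, ⟨hyP, hyT⟩, hyg⟩ := exists_decompose_eq_unit hQ hx hxg hu
  have hy : ∀ k, ¬ 𝒜 k ≤ P → k ≠ g → (decompose 𝒜 y k : R) = 0 := by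
    intro k hk hkg
    by_contra hyk
    refine hkg (eq_of_conj_mul_eq houter hcp hu (decompose 𝒜 y k).2 hyk fun a ha => ?_).symm
    have hc := conj_mem_zero 𝒜 hu ha
    -- the commutator has no `g`-component, so `hT` applies to it
    have hz : (u : R) * a * ((u⁻¹ : Rˣ) : R) * y - y * a ∈ P ⊓ RH 𝒜 (T \ {g}) := by
      refine ⟨P.sub_mem (hP _ hc y hyP).1 (hP a ha y hyP).2, (mem_RH_iff 𝒜).2 fun j hj => ?_⟩
      rw [coe_decompose_mul_sub_mul 𝒜 hc ha]
      by_cases hjg : j = g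
      · rw [hjg, hyg, Units.inv_mul_cancel_right, sub_self]
      · rw [(mem_RH_iff 𝒜).1 hyT j fun hjT => hj ⟨hjT, hjg⟩, mul_zero, zero_mul, sub_self]
    have hzk := (mem_RH_iff 𝒜).1 (hT hz) k hk
    rwa [coe_decompose_mul_sub_mul 𝒜 hc ha, sub_eq_zero] at hzk
  have hyu : y - u ∈ RH 𝒜 {k | 𝒜 k ≤ P} := by
    refine (mem_RH_iff 𝒜).2 fun k hk => ?_
    rw [← hyg, coe_decompose_sub_decompose]
    split_ifs with hkg
    · rfl
    · exact hy k hk hkg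
  refine grade_le_of_unit_mem hP hu ?_
  simpa using P.sub_mem hyP (RH_le 𝒜 (fun k hk => hk) hyu)

theorem inf_RH_le (houter : IsOuterAction 𝒜) (hcp : IsCrossedProduct 𝒜)
    {P : AddSubgroup R} (hP : IsSubBimodule 𝒜 P) (T : Finset G) :
    P ⊓ RH 𝒜 T ≤ RH 𝒜 {k | 𝒜 k ≤ P} := by
  induction T using Finset.strongInduction with
  | H T ih =>
  intro x hx
  obtain ⟨hxP, hxT⟩ := AddSubgroup.mem_inf.1 hx
  rcases T.eq_empty_or_nonempty with rfl | ⟨g, hg⟩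
  · rw [Finset.coe_empty, RH_empty, AddSubgroup.mem_bot] at hxT
    rw [hxT]
    exact zero_mem _
  have ih' := ih (T.erase g) (Finset.erase_ssubset hg)
  rw [Finset.coe_erase] at ih'
  have hxg : (decompose 𝒜 x g : R) ∈ RH 𝒜 {k | 𝒜 k ≤ P} := by
    by_cases h0 : (decompose 𝒜 x g : R) = 0
    · rw [h0]
      exact zero_mem _
    exact grade_le_RH 𝒜 (grade_le_of_decompose_ne_zero houter hcp hP ih' hx h0)
      (decompose 𝒜 x g).2
  have hrest : x - decompose 𝒜 x g ∈ RH 𝒜 {k | 𝒜 k ≤ P} := by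
    refine ih' ⟨P.sub_mem hxP (RH_le 𝒜 (fun k hk => hk) hxg), (mem_RH_iff 𝒜).2 fun k hk => ?_⟩
    rw [coe_decompose_sub_decompose]
    split_ifs with hkg
    · rfl
    · exact (mem_RH_iff 𝒜).1 hxT k fun hkT => hk ⟨hkT, hkg⟩
  simpa using add_mem hrest hxg

theorem exists_RH_eq (houter : IsOuterAction 𝒜) (hcp : IsCrossedProduct 𝒜)
    {P : AddSubgroup R} (hP : IsSubBimodule 𝒜 P) : ∃ H : Set G, RH 𝒜 H = P := by
  classical
  refine ⟨{k | 𝒜 k ≤ P}, le_antisymm (RH_le 𝒜 fun k hk => hk) fun x hx => ?_⟩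
  refine inf_RH_le houter hcp hP (DFinsupp.support (decompose 𝒜 x))
    ⟨hx, (mem_RH_iff 𝒜).2 fun g hg => ?_⟩
  rw [DFinsupp.notMem_support_iff.1 hg, ZeroMemClass.coe_zero]

end Classification

section Isomorphisms

variable {𝒜 : G → AddSubgroup R} [GradedRing 𝒜]

def BimodIso.symm {P Q : AddSubgroup R} (hP : IsSubBimodule 𝒜 P) (φ : BimodIso 𝒜 P Q) :
    BimodIso 𝒜 Q P where
  toEquiv := φ.toEquiv.symm
  map_left a x ha hx hax := by
    set p := φ.toEquiv.symm ⟨x, hx⟩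
    have h := φ.map_left a p ha p.2 (hP a ha p p.2).1
    rw [Subtype.coe_eta, AddEquiv.apply_symm_apply] at h
    exact congrArg Subtype.val
      (φ.toEquiv.symm_apply_eq.2 (Subtype.ext h.symm : (⟨a * x, hax⟩ : Q) = _))
  map_right a x ha hx hxa := by
    set p := φ.toEquiv.symm ⟨x, hx⟩
    have h := φ.map_right a p ha p.2 (hP a ha p p.2).2
    rw [Subtype.coe_eta, AddEquiv.apply_symm_apply] at h
    exact congrArg Subtype.val
      (φ.toEquiv.symm_apply_eq.2 (Subtype.ext h.symm : (⟨x * a, hxa⟩ : Q) = _))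

def BimodIso.mulRight {g h k : G} (hk : h + g = k) {T : Rˣ} (hT : (T : R) ∈ 𝒜 g)
    (hcomm : ∀ a ∈ 𝒜 0, (T : R) * a = a * T) : BimodIso 𝒜 (𝒜 h) (𝒜 k) where
  toEquiv :=
    { toFun := fun x => ⟨x * T, mul_mem_of_add_eq 𝒜 x.2 hT hk⟩
      invFun := fun y => ⟨y * ((T⁻¹ : Rˣ) : R),
        mul_mem_of_add_eq 𝒜 y.2 (val_inv_mem_neg 𝒜 hT) (by rw [← hk, add_neg_cancel_right])⟩
      left_inv := fun x => Subtype.ext (T.mul_inv_cancel_right (x : R))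
      right_inv := fun y => Subtype.ext (T.inv_mul_cancel_right (y : R))
      map_add' := fun x y => Subtype.ext (add_mul (x : R) y T) }
  map_left a x _ _ _ := mul_assoc a x T
  map_right a x ha _ _ := by
    change x * a * T = x * T * a
    rw [mul_assoc, ← hcomm a ha, mul_assoc]

theorem subset_of_bimodIso [IsSimpleRing (𝒜 0)] (houter : IsOuterAction 𝒜)
    (hcp : IsCrossedProduct 𝒜) {S T : Set G} (φ : BimodIso 𝒜 (RH 𝒜 S) (RH 𝒜 T)) : S ⊆ T := by
  have := nontrivial_of_isSimpleRing_zero 𝒜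
  intro s hs
  obtain ⟨u, hu⟩ := hcp s
  have huS : (u : R) ∈ RH 𝒜 S := grade_le_RH 𝒜 hs hu
  set y : R := (φ.toEquiv ⟨u, huS⟩ : R)
  have hrel : ∀ a ∈ 𝒜 0, (u : R) * a * ((u⁻¹ : Rˣ) : R) * y = y * a := fun a ha => by
    have hua := (isSubBimodule_RH S a ha _ huS).2
    rw [← φ.map_right a _ ha huS hua, ← φ.map_left _ _ (conj_mem_zero 𝒜 hu ha) huS
      (by rwa [Units.inv_mul_cancel_right])]
    simp only [Units.inv_mul_cancel_right]
  obtain ⟨t, ht⟩ : ∃ t, (decompose 𝒜 y t : R) ≠ 0 := by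
    by_contra! h
    have hy : y ∈ RH 𝒜 ∅ := (mem_RH_iff 𝒜).2 fun t _ => h t
    rw [RH_empty, AddSubgroup.mem_bot, ZeroMemClass.coe_eq_zero, AddEquiv.map_eq_zero_iff] at hy
    exact u.ne_zero (congrArg Subtype.val hy)
  have htT : t ∈ T := by
    by_contra htT
    exact ht ((mem_RH_iff 𝒜).1 (φ.toEquiv ⟨u, huS⟩).2 t htT)
  rwa [eq_of_conj_mul_eq houter hcp hu (decompose 𝒜 y t).2 ht fun a ha => ?_]
  have h := congrArg (fun r => (decompose 𝒜 r t : R)) (sub_eq_zero.2 (hrel a ha))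
  rwa [coe_decompose_mul_sub_mul 𝒜 (conj_mem_zero 𝒜 hu ha) ha, decompose_zero,
    DirectSum.zero_apply, ZeroMemClass.coe_zero, sub_eq_zero] at h

end Isomorphisms

section Forward

variable {𝒜 : G → AddSubgroup R} [GradedRing 𝒜]

theorem isSubBimodule_map_ideal (I : TwoSidedIdeal (𝒜 0)) :
    IsSubBimodule 𝒜 (I.asIdeal.toAddSubgroup.map (𝒜 0).subtype) := by
  rintro a ha _ ⟨c, hc, rfl⟩
  have hc' : c ∈ I := TwoSidedIdeal.mem_asIdeal.1 hc
  exact ⟨⟨⟨a, ha⟩ * c, TwoSidedIdeal.mem_asIdeal.2 (I.mul_mem_left _ _ hc'), rfl⟩,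
    ⟨c * ⟨a, ha⟩, TwoSidedIdeal.mem_asIdeal.2 (I.mul_mem_right _ _ hc'), rfl⟩⟩

theorem IsControlled.isSimpleRing (hC : IsControlled 𝒜) (hcp : IsCrossedProduct 𝒜) :
    IsSimpleRing (𝒜 0) := by
  have : Nontrivial (𝒜 0) := (AddSubgroup.nontrivial_iff_ne_bot _).2 fun h =>
    Set.singleton_ne_empty (0 : G) (hC.2.1 (by rw [RH_singleton, h, RH_empty]))
  refine .of_eq_bot_or_eq_top fun I => or_iff_not_imp_left.2 fun hI => ?_
  obtain ⟨H, hH⟩ := hC.2.2.1 _ (isSubBimodule_map_ideal I)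
  have hne : H.Nonempty := by
    refine Set.nonempty_iff_ne_empty.2 fun hH0 =>
      hI (eq_bot_iff.2 fun c hc => (TwoSidedIdeal.mem_bot _).2 ?_)
    rw [hH0, RH_empty] at hH
    have hcH : (c : R) ∈ (⊥ : AddSubgroup R) := hH ▸ ⟨c, TwoSidedIdeal.mem_asIdeal.2 hc, rfl⟩
    exact Subtype.ext hcH
  obtain ⟨h, hh⟩ := hne
  obtain ⟨u, hu⟩ := hcp h
  obtain ⟨c, hc, hcu⟩ := hH ▸ grade_le_RH 𝒜 hh hu
  replace hcu : (c : R) = u := hcu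
  have hu0 : (u : R) ∈ 𝒜 0 := hcu ▸ c.2
  have hcI := I.mul_mem_right c ⟨((u⁻¹ : Rˣ) : R), neg_zero (G := G) ▸ val_inv_mem_neg 𝒜 hu0⟩
    (TwoSidedIdeal.mem_asIdeal.1 hc)
  rw [← I.one_mem_iff]
  convert hcI
  ext
  simp [hcu]

theorem IsControlled.not_isInnerOnZero (hC : IsControlled 𝒜) {g : G} (hg : g ≠ 0) {u : Rˣ}
    (hu : (u : R) ∈ 𝒜 g) : ¬ IsInnerOnZero 𝒜 u := by
  rintro ⟨v, w, -, hw, hvw, hwv, hconj⟩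
  let T : Rˣ := ⟨w, v, hwv, hvw⟩ * u
  have hT : (T : R) ∈ 𝒜 g := mul_mem_of_add_eq 𝒜 hw hu (zero_add g)
  have hcomm : ∀ a ∈ 𝒜 0, (T : R) * a = a * T := fun a ha => by
    calc (T : R) * a = w * ((u : R) * a * ((u⁻¹ : Rˣ) : R)) * u := by simp [T, mul_assoc]
      _ = a * T := by simp [T, hconj a ha, ← mul_assoc, hwv]
  have hiso := (hC.2.2.2 {0} {g}).1
    (by rw [RH_singleton, RH_singleton]; exact ⟨BimodIso.mulRight (zero_add g) hT hcomm⟩)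
  exact hg (Set.singleton_eq_singleton_iff.1 hiso).symm

end Forward

end Controlled

/-- If `R` is a `G`-crossed product (each `R_g` contains a unit of `R`),
then `R` is `G`-controlled iff `R_e` is a simple ring and for every invertible
`u ∈ R_g` with `g ≠ e`, the automorphism `a ↦ u a u⁻¹` of `R_e` is outer, i.e. there
is no `v ∈ U(R_e)` with `u a u⁻¹ = v a v⁻¹` for all `a ∈ R_e`. -/
theorem stmt17 (𝒜 : G → AddSubgroup R) [GradedRing 𝒜]
    (hcp : ∀ g : G, ∃ u : Rˣ, (u : R) ∈ 𝒜 g) :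
    Controlled.IsControlled 𝒜 ↔
      (IsSimpleRing ↥(𝒜 0) ∧
        ∀ g : G, g ≠ 0 → ∀ u : Rˣ, (u : R) ∈ 𝒜 g →
          ¬ ∃ v w : R, v ∈ 𝒜 0 ∧ w ∈ 𝒜 0 ∧ v * w = 1 ∧ w * v = 1 ∧
              ∀ a ∈ 𝒜 0, (u : R) * a * ((u⁻¹ : Rˣ) : R) = v * a * w) := by
  open Controlled in
  refine ⟨fun hC => ⟨hC.isSimpleRing hcp, fun g hg u hu => hC.not_isInnerOnZero hg hu⟩, ?_⟩
  rintro ⟨hs, houter⟩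
  have := nontrivial_of_isSimpleRing_zero 𝒜
  refine ⟨isSubBimodule_RH, RH_injective hcp, fun P hP => exists_RH_eq houter hcp hP,
    fun S T => ⟨?_, ?_⟩⟩
  · rintro ⟨φ⟩
    exact (subset_of_bimodIso houter hcp φ).antisymm
      (subset_of_bimodIso houter hcp (φ.symm (isSubBimodule_RH S)))
  · rintro rfl
    exact ⟨⟨AddEquiv.refl _, fun _ _ _ _ _ => rfl, fun _ _ _ _ _ => rfl⟩⟩
end

section
/- Let R be a strongly G-graded unital ring which is G-controlled. Then H ↦ R_H = ⊕_{h∈H} R_h is a bijection between submonoids of G and unital subrings of R containing R_e. -/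
open DirectSum Pointwise

variable {G R : Type*} [AddGroup G] [DecidableEq G] [Ring R]



open Controlled in
lemma auxA_le_RH (𝒜 : G → AddSubgroup R) {H : Set G} {g : G} (hg : g ∈ H) :
    𝒜 g ≤ RH 𝒜 H :=
  le_iSup₂ (f := fun h _ => 𝒜 h) g hg

open Controlled in
lemma auxA_mem_of_le (𝒜 : G → AddSubgroup R)
    (hinj : Function.Injective (RH 𝒜)) {H : Set G} {k : G}
    (hk : 𝒜 k ≤ RH 𝒜 H) : k ∈ H := by
  have h1 : RH 𝒜 (insert k H) = RH 𝒜 H := by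
    refine le_antisymm (iSup₂_le ?_)
      (iSup₂_le fun h hh => le_iSup₂ (f := fun h _ => 𝒜 h) h (Set.mem_insert_of_mem _ hh))
    rintro h (rfl | hh)
    · exact hk
    · exact auxA_le_RH 𝒜 hh
  have h2 := hinj h1
  rw [← h2]
  exact Set.mem_insert k H

open Controlled in
lemma auxA_mul_mem (𝒜 : G → AddSubgroup R) [GradedRing 𝒜] {H : Set G}
    (hH : ∀ g ∈ H, ∀ h ∈ H, g + h ∈ H) {x y : R}
    (hx : x ∈ RH 𝒜 H) (hy : y ∈ RH 𝒜 H) : x * y ∈ RH 𝒜 H := by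
  have key : ∀ g ∈ H, ∀ x ∈ 𝒜 g, ∀ y ∈ RH 𝒜 H, x * y ∈ RH 𝒜 H := by
    intro g hg x hx y hy
    have h1 : RH 𝒜 H ≤ (RH 𝒜 H).comap (AddMonoidHom.mulLeft x) := by
      refine iSup₂_le fun h hh z hz => ?_
      exact auxA_le_RH 𝒜 (hH g hg h hh) (SetLike.mul_mem_graded hx hz)
    exact h1 hy
  have h2 : RH 𝒜 H ≤ (RH 𝒜 H).comap (AddMonoidHom.mulRight y) :=
    iSup₂_le fun g hg z hz => key g hg z hz y hy
  exact h2 hx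

/-- If `R` is strongly `G`-graded and `G`-controlled, then
`H ↦ R_H` is a bijection between submonoids of `G` and unital subrings of `R`
containing `R_e`. -/
theorem stmt18 (𝒜 : G → AddSubgroup R) [GradedRing 𝒜]
    (hstrong : Controlled.IsStronglyGraded 𝒜)
    (hc : Controlled.IsControlled 𝒜) :
    (∀ H : AddSubmonoid G, ∃ S : Subring R,
        (S : Set R) = (Controlled.RH 𝒜 (H : Set G) : Set R) ∧ (𝒜 0 : Set R) ⊆ S) ∧
    (∀ H₁ H₂ : AddSubmonoid G,
        Controlled.RH 𝒜 (H₁ : Set G) = Controlled.RH 𝒜 (H₂ : Set G) → H₁ = H₂) ∧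
    (∀ S : Subring R, (𝒜 0 : Set R) ⊆ S →
        ∃ H : AddSubmonoid G, (S : Set R) = (Controlled.RH 𝒜 (H : Set G) : Set R)) := by
  obtain ⟨hsub, hinj, hsurj, -⟩ := hc
  refine ⟨?_, ?_, ?_⟩
  · intro H
    refine ⟨{ carrier := Controlled.RH 𝒜 (H : Set G)
              zero_mem' := zero_mem _
              add_mem' := fun ha hb => add_mem ha hb
              neg_mem' := fun ha => neg_mem ha
              one_mem' := auxA_le_RH 𝒜 H.zero_mem (SetLike.one_mem_graded 𝒜)
              mul_mem' := fun ha hb => auxA_mul_mem 𝒜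
                (fun g hg h hh => H.add_mem hg hh) ha hb }, rfl, ?_⟩
    exact fun x hx => auxA_le_RH 𝒜 H.zero_mem hx
  · intro H₁ H₂ h
    have := hinj h
    ext g
    exact Set.ext_iff.mp this g
  · intro S hS
    have hbm : Controlled.IsSubBimodule 𝒜 S.toAddSubgroup := by
      intro a ha x hx
      exact ⟨S.mul_mem (hS ha) hx, S.mul_mem hx (hS ha)⟩
    obtain ⟨H, hH⟩ := hsurj S.toAddSubgroup hbm
    have hmem : ∀ k : G, 𝒜 k ≤ Controlled.RH 𝒜 H → k ∈ H :=
      fun k hk => auxA_mem_of_le 𝒜 hinj hk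
    refine ⟨{ carrier := H
              zero_mem' := hmem 0 (by rw [hH]; exact fun x hx => hS hx)
              add_mem' := ?_ }, ?_⟩
    · intro g h hg hh
      refine hmem (g + h) ?_
      rw [← hstrong g h, hH]
      refine (AddSubgroup.closure_le _).mpr ?_
      rintro _ ⟨x, hx, y, hy, rfl⟩
      have hx' : x ∈ S.toAddSubgroup := hH ▸ auxA_le_RH 𝒜 hg hx
      have hy' : y ∈ S.toAddSubgroup := hH ▸ auxA_le_RH 𝒜 hh hy
      exact S.mul_mem hx' hy'
    · exact congrArg (fun P : AddSubgroup R => (P : Set R)) hH.symm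
end
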